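/- Let ℋ be a finite-dimensional complex Hilbert space and H ∈ B(ℋ) self-adjoint with spectral decomposition H = ∑_n E_n P_n, where the E_n are the distinct eigenvalues of H and P_n are the orthogonal projections onto the corresponding eigenspaces. Let W : ℝ → ℂ be Lebesgue integrable. Then for every A ∈ B(ℋ): ∫_ℝ W(s)·e^{iHs}·A·e^{−iHs} ds = √(2π)·∑_{n,m} Ŵ(E_m − E_n)·P_n·A·P_m. -/

import Mathlib

/-!
The eigenprojections `Pₙ` of a self-adjoint operator are orthogonal idempotents summing to `1`,
so `f ↦ ∑ₙ f(n) Pₙ` is an algebra homomorphism and `e^{iHs} = ∑ₙ e^{iEₙs} Pₙ`. Hence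
`e^{iHs} A e^{−iHs} = ∑_{n,m} e^{i(Eₙ−E_m)s} Pₙ A P_m`, and integrating each scalar coefficient
against `W` gives `√(2π) Ŵ(E_m − Eₙ)`.
-/

open scoped BigOperators ComplexConjugate

noncomputable section

variable {ℋ : Type*} [NormedAddCommGroup ℋ] [InnerProductSpace ℂ ℋ] [FiniteDimensional ℂ ℋ]

/-- The orthogonal projection onto a subspace `K`, as an operator on `ℋ`. -/
noncomputable def orthProj (K : Submodule ℂ ℋ) : ℋ →L[ℂ] ℋ :=
  K.subtypeL.comp K.orthogonalProjectionOnto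

/-- The spectral projection of `H` associated with a set `S ⊆ ℝ`: the orthogonal projection
onto the span of all eigenvectors of `H` with eigenvalue in `S`. -/
noncomputable def spectralProj (H : ℋ →L[ℂ] ℋ) (S : Set ℝ) : ℋ →L[ℂ] ℋ :=
  orthProj (⨆ μ ∈ S, Module.End.eigenspace (H : ℋ →ₗ[ℂ] ℋ) (μ : ℂ))

/-- An operator `A` is off-diagonal with respect to a projection `P` if `PAP = 0` and
`(1−P)A(1−P) = 0`. -/
def IsOffDiagonal (P A : ℋ →L[ℂ] ℋ) : Prop :=
  P * A * P = 0 ∧ (1 - P) * A * (1 - P) = 0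

/-- The Fourier transform `Ŵ(ω) = (2π)^{-1/2} ∫ W(s) e^{−iωs} ds`. -/
noncomputable def fhat (W : ℝ → ℂ) (ω : ℝ) : ℂ :=
  (Real.sqrt (2 * Real.pi) : ℂ)⁻¹ * ∫ s : ℝ, Complex.exp (-(Complex.I * ω * s)) * W s

/-- The Heisenberg conjugation `e^{iHs} A e^{−iHs}`. -/
noncomputable def heisConj (H : ℋ →L[ℂ] ℋ) (s : ℝ) (A : ℋ →L[ℂ] ℋ) : ℋ →L[ℂ] ℋ :=
  NormedSpace.exp ((s : ℂ) • (Complex.I • H)) * A *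
    NormedSpace.exp ((-s : ℂ) • (Complex.I • H))

open MeasureTheory Complex

namespace CompleteOrthogonalIdempotents

variable {𝕂 𝔸 ι : Type*} [Fintype ι]

def sumSMulAlgHom [CommSemiring 𝕂] [Semiring 𝔸] [Algebra 𝕂 𝔸] {e : ι → 𝔸}
    (he : CompleteOrthogonalIdempotents e) : (ι → 𝕂) →ₐ[𝕂] 𝔸 :=
  AlgHom.ofLinearMap (Fintype.linearCombination 𝕂 e)
    (by simpa [Fintype.linearCombination_apply] using he.complete)
    (fun f g => by
      classical
      simp only [Fintype.linearCombination_apply, Finset.sum_mul, Finset.mul_sum,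
        smul_mul_smul_comm, he.toOrthogonalIdempotents.mul_eq, smul_ite, smul_zero,
        Finset.sum_ite_eq', Finset.mem_univ, if_true, Pi.mul_apply])

theorem sumSMulAlgHom_apply [CommSemiring 𝕂] [Semiring 𝔸] [Algebra 𝕂 𝔸] {e : ι → 𝔸}
    (he : CompleteOrthogonalIdempotents e) (f : ι → 𝕂) :
    he.sumSMulAlgHom f = ∑ i, f i • e i := rfl

theorem exp_sum_smul [RCLike 𝕂] [NormedRing 𝔸] [NormedAlgebra 𝕂 𝔸] [CompleteSpace 𝔸]
    {e : ι → 𝔸} (he : CompleteOrthogonalIdempotents e) (a : ι → 𝕂) :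
    NormedSpace.exp (∑ i, a i • e i) = ∑ i, NormedSpace.exp (a i) • e i := by
  let _ : NormedAlgebra ℚ 𝔸 := NormedAlgebra.restrictScalars ℚ 𝕂 𝔸
  have hcont : Continuous (he.sumSMulAlgHom (𝕂 := 𝕂)) :=
    LinearMap.continuous_of_finiteDimensional (he.sumSMulAlgHom (𝕂 := 𝕂)).toLinearMap
  rw [← he.sumSMulAlgHom_apply, ← NormedSpace.map_exp _ hcont, sumSMulAlgHom_apply]
  simp only [Pi.coe_exp]

end CompleteOrthogonalIdempotents

section Spectral

variable {𝕜 V ι : Type*} [RCLike 𝕜] [NormedAddCommGroup V] [InnerProductSpace 𝕜 V]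

theorem OrthogonalFamily.completeOrthogonalIdempotents_starProjection [Fintype ι]
    {K : ι → Submodule 𝕜 V} [∀ i, CompleteSpace (K i)]
    (hK : OrthogonalFamily 𝕜 (fun i => K i) fun i => (K i).subtypeₗᵢ) (htop : ⨆ i, K i = ⊤) :
    CompleteOrthogonalIdempotents fun i => (K i).starProjection where
  idem i := (K i).isIdempotentElem_starProjection
  ortho _ _ hij := (hK.isOrtho hij).starProjection_comp_starProjection
  complete := by
    ext x
    simpa using hK.sum_projection_of_mem_iSup x (htop ▸ Submodule.mem_top)

theorem LinearMap.IsSymmetric.iSup_eigenspace_eq_top [FiniteDimensional 𝕜 V] {T : V →ₗ[𝕜] V}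
    (hT : T.IsSymmetric) {μ : ι → 𝕜} (hμ : ∀ ν, Module.End.HasEigenvalue T ν → ∃ i, μ i = ν) :
    ⨆ i, Module.End.eigenspace T (μ i) = ⊤ := by
  refine eq_top_iff.mpr ?_
  rw [← Submodule.orthogonal_eq_bot_iff.mp hT.orthogonalComplement_iSup_eigenspaces_eq_bot]
  refine iSup_le fun ν => ?_
  by_cases hν : Module.End.HasEigenvalue T ν
  · obtain ⟨i, rfl⟩ := hμ ν hν
    exact le_iSup (fun i => Module.End.eigenspace T (μ i)) i
  · rw [Module.End.hasEigenvalue_iff, not_not] at hν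
    simp [hν]

end Spectral

theorem completeOrthogonalIdempotents_orthProj_eigenspace {ι : Type*} [Fintype ι]
    {H : ℋ →L[ℂ] ℋ} (hH : IsSelfAdjoint H) {μ : ι → ℂ} (hμ_inj : Function.Injective μ)
    (hμ : ∀ ν, Module.End.HasEigenvalue (H : ℋ →ₗ[ℂ] ℋ) ν → ∃ i, μ i = ν) :
    CompleteOrthogonalIdempotents
      fun i => orthProj (Module.End.eigenspace (H : ℋ →ₗ[ℂ] ℋ) (μ i)) :=
  OrthogonalFamily.completeOrthogonalIdempotents_starProjection
    (hH.isSymmetric.orthogonalFamily_eigenspaces.comp hμ_inj)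
    (hH.isSymmetric.iSup_eigenspace_eq_top hμ)

theorem heisConj_sum_smul {ι : Type*} [Fintype ι] {P : ι → ℋ →L[ℂ] ℋ}
    (hP : CompleteOrthogonalIdempotents P) (E : ι → ℝ) (s : ℝ) (A : ℋ →L[ℂ] ℋ) :
    heisConj (∑ i, (E i : ℂ) • P i) s A =
      ∑ i, ∑ j, exp (↑((E i - E j) * s) * I) • (P i * A * P j) := by
  have hexp : ∀ c : ℂ, NormedSpace.exp (c • ∑ i, (E i : ℂ) • P i) =
      ∑ i, exp (c * E i) • P i := by
    intro c
    simp only [Finset.smul_sum, smul_smul, hP.exp_sum_smul, exp_eq_exp_ℂ]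
  rw [heisConj, smul_smul, smul_smul, hexp, hexp, Finset.sum_mul, Finset.sum_mul]
  refine Finset.sum_congr rfl fun i _ => ?_
  rw [Finset.mul_sum]
  refine Finset.sum_congr rfl fun j _ => ?_
  rw [smul_mul_assoc, smul_mul_assoc, mul_smul_comm, smul_smul, ← exp_add]
  congr 2
  push_cast
  ring

theorem integrable_mul_exp_ofReal_mul_I {W : ℝ → ℂ} (hW : Integrable W) (θ : ℝ) :
    Integrable fun s => W s * exp (↑(θ * s) * I) :=
  hW.mul_bdd (by fun_prop) (.of_forall fun s => (norm_exp_ofReal_mul_I _).le)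

theorem integral_mul_exp_ofReal_mul_I (W : ℝ → ℂ) (θ : ℝ) :
    ∫ s, W s * exp (↑(θ * s) * I) = Real.sqrt (2 * Real.pi) * fhat W (-θ) := by
  have hsqrt : (Real.sqrt (2 * Real.pi) : ℂ) ≠ 0 := by
    exact_mod_cast (Real.sqrt_pos.mpr (by positivity)).ne'
  rw [fhat, ← mul_assoc, mul_inv_cancel₀ hsqrt, one_mul]
  congr! 2 with s
  rw [mul_comm]
  congr 2
  push_cast
  ring

theorem statement14 (H : ℋ →L[ℂ] ℋ) (hH : IsSelfAdjoint H)
    (n : ℕ) (E : Fin n → ℝ) (hE_inj : Function.Injective E)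
    (hE_all : ∀ μ : ℂ, Module.End.HasEigenvalue (H : ℋ →ₗ[ℂ] ℋ) μ → ∃ i, (E i : ℂ) = μ)
    (P : Fin n → (ℋ →L[ℂ] ℋ))
    (hP : ∀ i, P i = orthProj (Module.End.eigenspace (H : ℋ →ₗ[ℂ] ℋ) (E i : ℂ)))
    (hdecomp : H = ∑ i, (E i : ℂ) • P i)
    (W : ℝ → ℂ) (hW : MeasureTheory.Integrable W)
    (A : ℋ →L[ℂ] ℋ) :
    ∫ s : ℝ, W s • heisConj H s A =
      (Real.sqrt (2 * Real.pi) : ℂ) • ∑ i, ∑ j, fhat W (E j - E i) • (P i * A * P j) := by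
  have hPc : CompleteOrthogonalIdempotents P := by
    rw [funext hP]
    exact completeOrthogonalIdempotents_orthProj_eigenspace hH
      (ofReal_injective.comp hE_inj) hE_all
  have hint : ∀ i j, Integrable fun s => W s * exp (↑((E i - E j) * s) * I) :=
    fun i j => integrable_mul_exp_ofReal_mul_I hW _
  calc ∫ s, W s • heisConj H s A
      = ∫ s, ∑ i, ∑ j, (W s * exp (↑((E i - E j) * s) * I)) • (P i * A * P j) := by
        simp only [hdecomp, heisConj_sum_smul hPc, Finset.smul_sum, smul_smul]
    _ = ∑ i, ∑ j, (∫ s, W s * exp (↑((E i - E j) * s) * I)) • (P i * A * P j) := by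
        rw [integral_finsetSum _ fun i _ =>
          integrable_finsetSum _ fun j _ => (hint i j).smul_const _]
        congr! 1 with i
        rw [integral_finsetSum _ fun j _ => (hint i j).smul_const _]
        congr! 1 with j
        exact integral_smul_const _ _
    _ = _ := by
        simp only [integral_mul_exp_ofReal_mul_I, neg_sub, Finset.smul_sum, smul_smul]
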